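/- arXiv:2507.10068 — 2 statements merged into one kernel-verified Lean document; each statement's English description precedes it below -/
import Mathlib

section
/- For 0 ≤ r₁ ≤ r₂ ≤ m, the rows of A₃^{⊗m} whose Hamming weights lie in the interval [2^{r₂}·3^{m−r₂}, 2^{r₁}·3^{m−r₁}] span the BiD code BiD(m,r₁,r₂), which has F₂-dimension Σ_{w=r₁}^{r₂} C(m,w)·2^w. -/
open Finset

abbrev F2 := ZMod 2
abbrev F4 := GaloisField 2 2

def A3 : Matrix (ZMod 3) (ZMod 3) F2 := !![1,1,1; 1,1,0; 1,0,1]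

/-- The `m`-fold Kronecker power of `A3`, with rows and columns indexed by `Fin m → ZMod 3`. -/
def A3pow (m : ℕ) : Matrix (Fin m → ZMod 3) (Fin m → ZMod 3) F2 :=
  fun r c => ∏ i, A3 (r i) (c i)

/-- The DFT coefficient at frequency `j` as an `F2`-linear functional. -/
noncomputable def dftL (m : ℕ) (α : F4) (j : Fin m → ZMod 3) :
    ((Fin m → ZMod 3) → F2) →ₗ[F2] F4 :=
  ∑ i : Fin m → ZMod 3,
    α ^ (∑ l, i l * j l).val • ((Algebra.linearMap F2 F4).comp (LinearMap.proj i))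

/-- The abelian code with frequency weight set `W`. -/
noncomputable def abelianCode (m : ℕ) (α : F4) (W : Finset ℕ) :
    Submodule F2 ((Fin m → ZMod 3) → F2) :=
  ⨅ j ∈ {j : Fin m → ZMod 3 | hammingNorm j ∉ W}, LinearMap.ker (dftL m α j)

/-- The BiD code as the span of the rows of `A3pow m` with weight in the prescribed range. -/
noncomputable def BiD (m r₁ r₂ : ℕ) : Submodule F2 ((Fin m → ZMod 3) → F2) :=
  Submodule.span F2 {a | ∃ r, (2^r₂ * 3^(m-r₂) ≤ hammingNorm (A3pow m r) ∧
    hammingNorm (A3pow m r) ≤ 2^r₁ * 3^(m-r₁)) ∧ a = A3pow m r}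

/-- Minimum distance of a linear code. -/
noncomputable def minDist {m : ℕ} (C : Submodule F2 ((Fin m → ZMod 3) → F2)) : ℕ :=
  sInf {d : ℕ | ∃ a ∈ C, a ≠ 0 ∧ hammingNorm a = d}

/-!
Row `r` of `A3pow m` has weight `2 ^ wt r * 3 ^ (m - wt r)`, where `wt` is the Hamming weight.
This is strictly decreasing in `wt r`, so the rows generating `BiD m r₁ r₂` are exactly those with
`wt r ∈ [r₁, r₂]`, and since `A3 ^ 4 = 1` all rows together form a basis. The DFT of row `r` at
frequency `j` is the entry `(r, j)` of the Kronecker power of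
`Â = A3 · (α ^ (x j))ₓⱼ = 1 ⊕ [[α², α], [α, α²]]`. As `Â` respects the splitting `{0} ⊔ {1, 2}`,
this entry vanishes unless `r` and `j` have the same support, so the rows of weight in `W` lie in
`𝒜(m, W)`. Conversely `Â² = 1`, so the coordinates of a word in the row basis are recovered from
its spectrum through the same support-respecting matrix, and the coordinate of a row of weight
outside `W` only involves spectral values that vanish on `𝒜(m, W)`.
-/

namespace Matrix

variable {n R : Type*}

def kronPow [CommMonoid R] (m : ℕ) (A : Matrix n n R) : Matrix (Fin m → n) (Fin m → n) R :=
  of fun r c => ∏ i, A (r i) (c i)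

@[simp]
lemma kronPow_apply [CommMonoid R] (m : ℕ) (A : Matrix n n R) (r c : Fin m → n) :
    kronPow m A r c = ∏ i, A (r i) (c i) := rfl

lemma kronPow_mul [Fintype n] [CommSemiring R] (m : ℕ) (A B : Matrix n n R) :
    kronPow m (A * B) = kronPow m A * kronPow m B := by
  ext r c
  simp only [kronPow_apply, mul_apply, prod_univ_sum, Fintype.piFinset_univ, prod_mul_distrib]

lemma kronPow_one [DecidableEq n] [CommSemiring R] (m : ℕ) :
    kronPow m (1 : Matrix n n R) = 1 := by
  ext r c
  rcases eq_or_ne r c with rfl | h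
  · simp
  · obtain ⟨i, hi⟩ := Function.ne_iff.1 h
    rw [one_apply_ne h, kronPow_apply]
    exact prod_eq_zero (mem_univ i) (one_apply_ne hi)

def kronPowHom [Fintype n] [DecidableEq n] [CommSemiring R] (m : ℕ) :
    Matrix n n R →* Matrix (Fin m → n) (Fin m → n) R where
  toFun := kronPow m
  map_one' := kronPow_one m
  map_mul' := kronPow_mul m

lemma kronPow_map {S : Type*} [CommSemiring R] [CommSemiring S] (f : R →+* S) (m : ℕ)
    (A : Matrix n n R) : (kronPow m A).map f = kronPow m (A.map f) := by
  ext r c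
  simp

lemma hammingNorm_kronPow_apply [Fintype n] [CommMonoidWithZero R]
    [NoZeroDivisors R] [Nontrivial R] [DecidableEq R] (m : ℕ) (A : Matrix n n R)
    (r : Fin m → n) : hammingNorm (kronPow m A r) = ∏ i, hammingNorm (A (r i)) := by
  simp only [hammingNorm]
  rw [← Fintype.card_piFinset]
  congr 1
  ext c
  simp [prod_ne_zero_iff]

lemma kronPow_apply_eq_zero_of_hammingNorm_ne [Zero n] [DecidableEq n] [CommMonoidWithZero R]
    {A : Matrix n n R} (hA : ∀ x y, A x y ≠ 0 → (x = 0 ↔ y = 0)) {m : ℕ} {r c : Fin m → n}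
    (h : hammingNorm r ≠ hammingNorm c) : kronPow m A r c = 0 := by
  contrapose! h
  rw [kronPow_apply] at h
  refine congrArg card (filter_congr fun i _ => not_congr (hA _ _ ?_))
  exact fun h0 => h (prod_eq_zero (mem_univ i) h0)

end Matrix

section Hamming

variable {ι β : Type*} [Fintype ι] [DecidableEq ι] [Fintype β] [DecidableEq β] [Zero β]

lemma filter_support_eq_piFinset (s : Finset ι) :
    ({x : ι → β | ({i | x i ≠ 0} : Finset ι) = s} : Finset (ι → β)) =
      Fintype.piFinset fun i => if i ∈ s then univ.erase 0 else {0} := by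
  ext x
  simp only [mem_filter, mem_univ, true_and, Fintype.mem_piFinset, Finset.ext_iff]
  refine forall_congr' fun i => ?_
  split_ifs with hi <;> simp [hi]

lemma card_filter_support_eq (s : Finset ι) :
    #{x : ι → β | ({i | x i ≠ 0} : Finset ι) = s} = (Fintype.card β - 1) ^ #s := by
  rw [filter_support_eq_piFinset, Fintype.card_piFinset]
  simp [apply_ite card, prod_ite_mem]

lemma card_filter_hammingNorm_eq (w : ℕ) :
    #{x : ι → β | hammingNorm x = w} = (Fintype.card ι).choose w * (Fintype.card β - 1) ^ w := by
  have hfib := sum_card_fiberwise_eq_card_filter univ (powersetCard w (univ : Finset ι))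
    (fun x : ι → β => ({i | x i ≠ 0} : Finset ι))
  simp only [mem_powersetCard_univ] at hfib
  rw [show (hammingNorm : (ι → β) → ℕ) = fun x => #{i | x i ≠ 0} from rfl, ← hfib,
    sum_congr rfl fun s hs => (card_filter_support_eq s).trans
      (congrArg _ (mem_powersetCard_univ.1 hs)), sum_const, card_powersetCard, card_univ,
    smul_eq_mul]

end Hamming

section RootsOfUnity

variable {M : Type*} [CommMonoid M] {n : ℕ} [NeZero n] {α : M}

lemma pow_val_add_of_pow_eq_one (hα : α ^ n = 1) (a b : ZMod n) :
    α ^ (a + b).val = α ^ a.val * α ^ b.val := by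
  rw [ZMod.val_add, ← pow_eq_pow_mod _ hα, pow_add]

lemma pow_val_sum_of_pow_eq_one {ι : Type*} (hα : α ^ n = 1) (s : Finset ι) (v : ι → ZMod n) :
    α ^ (∑ i ∈ s, v i).val = ∏ i ∈ s, α ^ (v i).val := by
  classical
  induction s using Finset.induction_on with
  | empty => simp
  | insert i s hi ih => rw [sum_insert hi, prod_insert hi, pow_val_add_of_pow_eq_one hα, ih]

lemma IsPrimitiveRoot.sq_add_self_add_one {R : Type*} [CommRing R] [IsDomain R] {ζ : R}
    (h : IsPrimitiveRoot ζ 3) : ζ ^ 2 + ζ + 1 = 0 := by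
  have := h.geom_sum_eq_zero (by norm_num)
  simp only [sum_range_succ, sum_range_zero] at this
  linear_combination this

end RootsOfUnity

lemma two_pow_mul_three_pow_sub_strictAntiOn (m : ℕ) :
    StrictAntiOn (fun w => 2 ^ w * 3 ^ (m - w)) (Set.Iic m) :=
  strictAntiOn_Iic_of_succ_lt fun w hw => by
    obtain ⟨k, rfl⟩ := Nat.exists_eq_add_of_lt hw
    have hk : 0 < 2 ^ w * 3 ^ k := by positivity
    simp only [Order.succ_eq_add_one, show w + k + 1 - (w + 1) = k by omega,
      show w + k + 1 - w = k + 1 by omega, pow_succ]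
    nlinarith

lemma window_iff_mem_Icc {m r₁ r₂ w : ℕ} (h1 : r₁ ≤ r₂) (h2 : r₂ ≤ m) (hw : w ≤ m) :
    (2 ^ r₂ * 3 ^ (m - r₂) ≤ 2 ^ w * 3 ^ (m - w) ∧ 2 ^ w * 3 ^ (m - w) ≤ 2 ^ r₁ * 3 ^ (m - r₁))
      ↔ w ∈ Icc r₁ r₂ := by
  have hanti := two_pow_mul_three_pow_sub_strictAntiOn m
  rw [hanti.le_iff_ge h2 hw, hanti.le_iff_ge hw (h1.trans h2), mem_Icc, and_comm]

lemma A3pow_eq_kronPow (m : ℕ) : A3pow m = Matrix.kronPow m A3 := rfl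

lemma A3_apply (x z : ZMod 3) : A3 x z = if x * z = 2 then 0 else 1 := by
  fin_cases x <;> fin_cases z <;> rfl

lemma hammingNorm_A3_apply (x : ZMod 3) : hammingNorm (A3 x) = if x = 0 then 3 else 2 := by
  revert x; decide

lemma hammingNorm_A3pow_apply {m : ℕ} (r : Fin m → ZMod 3) :
    hammingNorm (A3pow m r) = 2 ^ hammingNorm r * 3 ^ (m - hammingNorm r) := by
  have hzeros : #{i | r i = 0} = m - hammingNorm r := by
    have := card_filter_add_card_filter_not (s := univ) fun i => r i = 0
    rw [card_univ, Fintype.card_fin] at this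
    simp only [hammingNorm, ne_eq]
    omega
  rw [A3pow_eq_kronPow, Matrix.hammingNorm_kronPow_apply]
  simp only [hammingNorm_A3_apply, prod_ite, prod_const, hzeros]
  rw [mul_comm]
  rfl

lemma A3_pow_four : A3 ^ 4 = 1 := by decide

lemma isUnit_A3pow (m : ℕ) : IsUnit (A3pow m) :=
  (IsUnit.of_pow_eq_one A3_pow_four (by norm_num)).map (Matrix.kronPowHom m)

lemma BiD_eq_span_rows {m r₁ r₂ : ℕ} (h1 : r₁ ≤ r₂) (h2 : r₂ ≤ m) :
    BiD m r₁ r₂ = Submodule.span F2 ((A3pow m).row '' {r | hammingNorm r ∈ Icc r₁ r₂}) := by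
  rw [BiD]
  congr 1
  ext a
  simp only [Set.mem_ofPred_eq, hammingNorm_A3pow_apply,
    window_iff_mem_Icc h1 h2 (hammingNorm_le_card_fintype.trans_eq (Fintype.card_fin m))]
  exact exists_congr fun r => and_congr_right' eq_comm

def dftMatrix {R : Type*} [Monoid R] (n : ℕ) (α : R) : Matrix (ZMod n) (ZMod n) R :=
  Matrix.of fun x j => α ^ (x * j).val

lemma ZMod.sum_univ_three {M : Type*} [AddCommMonoid M] (f : ZMod 3 → M) :
    ∑ z, f z = f 0 + f 1 + f 2 := Fin.sum_univ_three f

lemma ZMod.three_cases : ∀ x : ZMod 3, x = 0 ∨ x = 1 ∨ x = 2 := by decide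

section A3Hat

variable {R : Type*} [CommRing R] [Algebra F2 R] {α : R}

def A3Hat (α : R) : Matrix (ZMod 3) (ZMod 3) R := A3.map (algebraMap F2 R) * dftMatrix 3 α

lemma two_eq_zero_of_algebra_zmod_two : (2 : R) = 0 := by
  rw [← map_ofNat (algebraMap F2 R) 2, show (OfNat.ofNat 2 : F2) = 0 from rfl, map_zero]

lemma A3Hat_apply (hα : α ^ 2 + α + 1 = 0) (x y : ZMod 3) :
    A3Hat α x y =
      if x = 0 ∨ y = 0 then (if x = y then 1 else 0) else if x = y then α ^ 2 else α := by
  have two : (2 : R) = 0 := two_eq_zero_of_algebra_zmod_two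
  simp only [A3Hat, Matrix.mul_apply, ZMod.sum_univ_three, Matrix.map_apply, dftMatrix,
    Matrix.of_apply]
  rcases x.three_cases with rfl | rfl | rfl <;> rcases y.three_cases with rfl | rfl | rfl <;>
    simp +decide [A3_apply, show (2 * 2 : ZMod 3) = 1 from rfl,
      show ZMod.val (1 : ZMod 3) = 1 from rfl, show ZMod.val (2 : ZMod 3) = 2 from rfl] <;>
    grind

lemma A3Hat_support (hα : α ^ 2 + α + 1 = 0) {x y : ZMod 3} (h : A3Hat α x y ≠ 0) :
    x = 0 ↔ y = 0 := by
  rw [A3Hat_apply hα] at h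
  split_ifs at h <;> grind

lemma A3Hat_mul_self (hα : α ^ 2 + α + 1 = 0) : A3Hat α * A3Hat α = 1 := by
  have two : (2 : R) = 0 := two_eq_zero_of_algebra_zmod_two
  ext x y
  simp only [Matrix.mul_apply, ZMod.sum_univ_three, A3Hat_apply hα, Matrix.one_apply]
  rcases x.three_cases with rfl | rfl | rfl <;> rcases y.three_cases with rfl | rfl | rfl <;>
    simp +decide <;>
    grind

end A3Hat

section AbelianCode

open Matrix

variable {m : ℕ} {α : F4}

lemma mem_abelianCode {W : Finset ℕ} {a : (Fin m → ZMod 3) → F2} :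
    a ∈ abelianCode m α W ↔ ∀ j, hammingNorm j ∉ W → dftL m α j a = 0 := by
  simp [abelianCode]

lemma dftL_eq_vecMul (hα : α ^ 3 = 1) (a : (Fin m → ZMod 3) → F2) :
    (fun j => dftL m α j a) = (algebraMap F2 F4 ∘ a) ᵥ* kronPow m (dftMatrix 3 α) := by
  ext j
  simp [dftL, vecMul, dotProduct, dftMatrix, pow_val_sum_of_pow_eq_one hα, mul_comm]

lemma dftL_vecMul_A3pow (hα : α ^ 3 = 1) (c : (Fin m → ZMod 3) → F2) :
    (fun j => dftL m α j (c ᵥ* A3pow m)) = (algebraMap F2 F4 ∘ c) ᵥ* kronPow m (A3Hat α) := by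
  have hmap : algebraMap F2 F4 ∘ (c ᵥ* A3pow m) =
      (algebraMap F2 F4 ∘ c) ᵥ* (A3pow m).map (algebraMap F2 F4) :=
    funext (RingHom.map_vecMul _ _ _)
  rw [dftL_eq_vecMul hα, hmap, A3Hat, kronPow_mul, ← vecMul_vecMul, A3pow_eq_kronPow, kronPow_map]

lemma dftL_A3pow_row (hα : α ^ 3 = 1) (r j : Fin m → ZMod 3) :
    dftL m α j (A3pow m r) = kronPow m (A3Hat α) r j := by
  have hsingle : algebraMap F2 F4 ∘ Pi.single r 1 = Pi.single r 1 := by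
    ext i
    by_cases h : i = r <;> simp [h]
  simpa [single_one_vecMul, hsingle, Matrix.row] using
    congrFun (dftL_vecMul_A3pow hα (Pi.single r 1)) j

lemma A3pow_row_mem_abelianCode (hα : IsPrimitiveRoot α 3) {W : Finset ℕ} {r : Fin m → ZMod 3}
    (hr : hammingNorm r ∈ W) : A3pow m r ∈ abelianCode m α W := by
  refine mem_abelianCode.2 fun j hj => ?_
  rw [dftL_A3pow_row hα.pow_eq_one]
  exact kronPow_apply_eq_zero_of_hammingNorm_ne (fun _ _ => A3Hat_support hα.sq_add_self_add_one)
    fun h => hj (h ▸ hr)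

lemma eq_zero_of_vecMul_A3pow_mem_abelianCode (hα : IsPrimitiveRoot α 3) {W : Finset ℕ}
    {c : (Fin m → ZMod 3) → F2} (hc : c ᵥ* A3pow m ∈ abelianCode m α W) {r : Fin m → ZMod 3}
    (hr : hammingNorm r ∉ W) : c r = 0 := by
  have hq := hα.sq_add_self_add_one
  have hKK : kronPow m (A3Hat α) * kronPow m (A3Hat α) = 1 := by
    change kronPowHom m _ * kronPowHom m _ = 1
    rw [← map_mul, A3Hat_mul_self hq, map_one]
  have hinv : algebraMap F2 F4 ∘ c =
      (fun j => dftL m α j (c ᵥ* A3pow m)) ᵥ* kronPow m (A3Hat α) := by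
    rw [dftL_vecMul_A3pow hα.pow_eq_one, vecMul_vecMul, hKK, vecMul_one]
  have hcoeff : algebraMap F2 F4 (c r) = 0 := by
    rw [← Function.comp_apply (f := algebraMap F2 F4), hinv]
    refine sum_eq_zero fun j _ => ?_
    dsimp only
    by_cases hj : hammingNorm j ∈ W
    · rw [kronPow_apply_eq_zero_of_hammingNorm_ne (fun _ _ => A3Hat_support hq)
        (fun h => hr (h ▸ hj)), mul_zero]
    · rw [mem_abelianCode.1 hc j hj, zero_mul]
  exact FaithfulSMul.algebraMap_injective F2 F4 (hcoeff.trans (map_zero _).symm)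

lemma abelianCode_eq_span_rows (hα : IsPrimitiveRoot α 3) (W : Finset ℕ) :
    abelianCode m α W = Submodule.span F2 ((A3pow m).row '' {r | hammingNorm r ∈ W}) := by
  refine le_antisymm (fun a ha => ?_) (Submodule.span_le.2 ?_)
  · obtain ⟨c, rfl⟩ := vecMul_surjective_iff_isUnit.2 (isUnit_A3pow m) a
    dsimp only at ha ⊢
    rw [vecMul_eq_sum]
    refine Submodule.sum_mem _ fun r _ => ?_
    by_cases hr : hammingNorm r ∈ W
    · exact Submodule.smul_mem _ _ (Submodule.subset_span ⟨r, hr, rfl⟩)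
    · rw [eq_zero_of_vecMul_A3pow_mem_abelianCode hα ha hr, zero_smul]
      exact Submodule.zero_mem _
  · rintro _ ⟨r, hr, rfl⟩
    exact A3pow_row_mem_abelianCode hα hr

lemma finrank_span_A3pow_rows (W : Finset ℕ) :
    Module.finrank F2 (Submodule.span F2 ((A3pow m).row '' {r | hammingNorm r ∈ W})) =
      ∑ w ∈ W, m.choose w * 2 ^ w := by
  have hind := (linearIndependent_rows_of_isUnit (isUnit_A3pow m)).comp _
    (Subtype.val_injective (p := fun r => hammingNorm r ∈ W))
  rw [Set.image_eq_range]
  refine (finrank_span_eq_card hind).trans ?_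
  rw [Fintype.card_subtype, ← sum_card_fiberwise_eq_card_filter]
  refine sum_congr rfl fun w _ => ?_
  rw [card_filter_hammingNorm_eq]
  simp

end AbelianCode

/-- The rows of `A3pow m` with Hamming weight in `[2^r₂·3^(m-r₂), 2^r₁·3^(m-r₁)]` span
the BiD code `𝒜(m, {r₁,…,r₂})`, whose dimension is `∑_{w=r₁}^{r₂} C(m,w)·2^w`. -/
theorem BiD_span_and_dim (m r₁ r₂ : ℕ) (h1 : r₁ ≤ r₂) (h2 : r₂ ≤ m)
    (α : F4) (hα : orderOf α = 3) :
    BiD m r₁ r₂ = abelianCode m α (Finset.Icc r₁ r₂) ∧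
    Module.finrank F2 (BiD m r₁ r₂) = ∑ w ∈ Finset.Icc r₁ r₂, m.choose w * 2^w := by
  have hprim : IsPrimitiveRoot α 3 := hα ▸ IsPrimitiveRoot.orderOf α
  rw [BiD_eq_span_rows h1 h2, abelianCode_eq_span_rows hprim]
  exact ⟨rfl, finrank_span_A3pow_rows _⟩
end

section
/- For m ≥ 2, the minimum nonzero Hamming weight of a codeword in BiD(m,1,1) is 4·3^{m−2}, and the maximum Hamming weight of a codeword in BiD(m,1,1) is 6·3^{m−2}. -/
open Finset

/-!
Each row of `A3pow m` of weight `2 · 3^(m-1)` is `x ↦ A3 s (x j)` for some coordinate `j` and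
`s ≠ 0`, so the codewords of `BiD m 1 1` are the functions `x ↦ ∑ i, g i (x i)` where every `g i`
is an even-weight function on `ZMod 3`. Summing the character `(-1)^a` over all `x` factors as
`∏ i, ∑ y, (-1)^(g i y) = (-1)^k 3^(m-k)`, where `k` is the number of nonzero `g i`, so such a
codeword has weight `(3^m - (-1)^k 3^(m-k)) / 2`. Over `1 ≤ k ≤ m` this is smallest at `k = 2`
and largest at `k = 1`.
-/

theorem AddChar.map_sum_eq_prod {A M ι : Type*} [AddCommMonoid A] [CommMonoid M]
    (ψ : AddChar A M) (s : Finset ι) (f : ι → A) :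
    ψ (∑ i ∈ s, f i) = ∏ i ∈ s, ψ (f i) := by
  induction s using Finset.cons_induction with
  | empty => simp
  | cons a s ha ih => rw [Finset.sum_cons, Finset.prod_cons, AddChar.map_add_eq_mul, ih]

theorem prod_ite_eq_zero_eq_pow_mul_pow {ι β M : Type*} [Fintype ι] [Zero β] [DecidableEq β]
    [CommMonoid M] (r : ι → β) (a b : M) :
    ∏ i, (if r i = 0 then a else b) = a ^ (Fintype.card ι - hammingNorm r) * b ^ hammingNorm r := by
  rw [Finset.prod_ite, Finset.prod_const, Finset.prod_const]
  congr 2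
  have := Finset.card_filter_add_card_filter_not (s := Finset.univ) (fun i => r i = 0)
  rw [Finset.card_univ] at this
  have hnorm : hammingNorm r = #{i | ¬ r i = 0} := rfl
  omega

theorem hammingNorm_prod {ι α R : Type*} [Fintype ι] [DecidableEq ι] [Fintype α]
    [CommMonoidWithZero R] [NoZeroDivisors R] [Nontrivial R] [DecidableEq R]
    (f : ι → α → R) :
    hammingNorm (fun x : ι → α => ∏ i, f i (x i)) = ∏ i, hammingNorm (f i) := by
  unfold hammingNorm
  rw [← Fintype.card_piFinset]
  congr 1
  ext x
  simp [Finset.prod_ne_zero_iff]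

theorem exists_eq_single_of_hammingNorm_eq_one {ι β : Type*} [Fintype ι] [DecidableEq ι]
    [Zero β] [DecidableEq β] {r : ι → β} (hr : hammingNorm r = 1) :
    ∃ j, r j ≠ 0 ∧ r = Pi.single j (r j) := by
  obtain ⟨j, hj⟩ := Finset.card_eq_one.mp hr
  have hsupp : ∀ i, r i ≠ 0 ↔ i = j := fun i => by
    simpa using Finset.ext_iff.mp hj i
  refine ⟨j, (hsupp j).mpr rfl, funext fun i => ?_⟩
  by_cases hij : i = j
  · subst hij; simp
  · simpa [Pi.single_apply, hij] using mt (hsupp i).mp hij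

theorem eq_one_of_two_pow_mul_three_pow_eq {k m n : ℕ} (h : 2 ^ k * 3 ^ m = 2 * 3 ^ n) : k = 1 := by
  have := congrArg (fun x => Nat.factorization x 2) h
  simpa [Nat.factorization_mul, Nat.Prime.factorization_self Nat.prime_two,
    Nat.factorization_eq_zero_of_not_dvd (by norm_num : ¬ 2 ∣ 3)] using this

theorem hammingNorm_single {ι β : Type*} [Fintype ι] [DecidableEq ι] [Zero β] [DecidableEq β]
    (j : ι) {s : β} (hs : s ≠ 0) : hammingNorm (Pi.single j s : ι → β) = 1 := by
  refine Finset.card_eq_one.mpr ⟨j, Finset.ext fun i => ?_⟩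
  by_cases hij : i = j
  · subst hij; simpa using hs
  · simp [Pi.single_apply, hij]

section coordSum

variable {ι α R : Type*} [Fintype ι] [CommSemiring R]

def coordSum : (ι → α → R) →ₗ[R] ((ι → α) → R) where
  toFun g x := ∑ i, g i (x i)
  map_add' g h := by funext x; simp [Finset.sum_add_distrib]
  map_smul' c g := by funext x; simp [Finset.mul_sum]

@[simp]
theorem coordSum_apply (g : ι → α → R) (x : ι → α) : coordSum g x = ∑ i, g i (x i) := rfl

theorem coordSum_single [DecidableEq ι] (j : ι) (w : α → R) :
    coordSum (Pi.single j w) = fun x => w (x j) := by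
  funext x
  rw [coordSum_apply, Finset.sum_eq_single j (fun i _ hij => by simp [hij]) (by simp)]
  simp

theorem sum_addChar_coordSum [DecidableEq ι] [Fintype α] {M : Type*} [CommSemiring M]
    (ψ : AddChar R M) (g : ι → α → R) :
    ∑ x, ψ (coordSum g x) = ∏ i, ∑ y, ψ (g i y) := by
  simp only [coordSum_apply, AddChar.map_sum_eq_prod, Fintype.prod_sum]

end coordSum

def signChar : AddChar F2 ℤ where
  toFun a := if a = 0 then 1 else -1
  map_zero_eq_one' := rfl
  map_add_eq_mul' := by decide

theorem sum_signChar_eq {X : Type*} [Fintype X] (f : X → F2) :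
    ∑ x, signChar (f x) = Fintype.card X - 2 * hammingNorm f := by
  have hsign : ∀ a : F2, signChar a = 1 - 2 * if a ≠ 0 then 1 else 0 := by decide
  simp only [hsign, Finset.sum_sub_distrib, ← Finset.mul_sum, Finset.sum_boole]
  simp [hammingNorm]

def evenWeight : Submodule F2 (ZMod 3 → F2) where
  carrier := {w | w 0 + w 1 + w 2 = 0}
  zero_mem' := rfl
  add_mem' {v w} (hv : v 0 + v 1 + v 2 = 0) (hw : w 0 + w 1 + w 2 = 0) :=
    show v 0 + w 0 + (v 1 + w 1) + (v 2 + w 2) = 0 by linear_combination hv + hw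
  smul_mem' c w (hw : w 0 + w 1 + w 2 = 0) :=
    show c * w 0 + c * w 1 + c * w 2 = 0 by linear_combination c * hw

theorem mem_evenWeight {w : ZMod 3 → F2} : w ∈ evenWeight ↔ w 0 + w 1 + w 2 = 0 := Iff.rfl

theorem A3_mem_evenWeight {s : ZMod 3} (hs : s ≠ 0) : A3 s ∈ evenWeight := by
  revert s; simp only [mem_evenWeight]; decide

theorem evenWeight_le_span : evenWeight ≤ Submodule.span F2 {A3 1, A3 2} := by
  intro w hw
  have cases : ∀ w : ZMod 3 → F2, w 0 + w 1 + w 2 = 0 →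
      w = 0 ∨ w = A3 1 ∨ w = A3 2 ∨ w = A3 1 + A3 2 := by decide
  rcases cases w hw with rfl | rfl | rfl | rfl
  · exact zero_mem _
  · exact Submodule.subset_span (by simp)
  · exact Submodule.subset_span (by simp)
  · exact add_mem (Submodule.subset_span (by simp)) (Submodule.subset_span (by simp))

theorem sum_signChar_of_mem_evenWeight {w : ZMod 3 → F2} (hw : w ∈ evenWeight) :
    ∑ y, signChar (w y) = if w = 0 then 3 else -1 := by
  revert w; simp only [mem_evenWeight]; decide

theorem hammingNorm_A3pow {m : ℕ} (r : Fin m → ZMod 3) :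
    hammingNorm (A3pow m r) = 3 ^ (m - hammingNorm r) * 2 ^ hammingNorm r := by
  have hrow : ∀ s, hammingNorm (A3 s) = if s = 0 then 3 else 2 := by decide
  rw [show A3pow m r = fun c => ∏ i, A3 (r i) (c i) from rfl, hammingNorm_prod]
  simp only [hrow, prod_ite_eq_zero_eq_pow_mul_pow, Fintype.card_fin]

theorem A3pow_single {m : ℕ} (j : Fin m) (s : ZMod 3) :
    A3pow m (Pi.single j s) = coordSum (Pi.single j (A3 s)) := by
  have hA3 : ∀ y, A3 0 y = 1 := by decide
  rw [coordSum_single]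
  funext x
  show ∏ i, A3 ((Pi.single j s : Fin m → ZMod 3) i) (x i) = _
  rw [Finset.prod_eq_single j (fun i _ hij => by simp [hij, hA3]) (by simp)]
  simp

theorem BiD_one_one_eq_map (m : ℕ) :
    BiD m 1 1 = (Submodule.pi Set.univ fun _ : Fin m => evenWeight).map coordSum := by
  apply le_antisymm
  · rw [BiD, Submodule.span_le]
    rintro _ ⟨r, ⟨hlo, hhi⟩, rfl⟩
    rw [hammingNorm_A3pow] at hlo hhi
    obtain ⟨j, hrj, hr⟩ := exists_eq_single_of_hammingNorm_eq_one
      (eq_one_of_two_pow_mul_three_pow_eq ((mul_comm _ _).trans (le_antisymm hhi hlo)))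
    refine ⟨Pi.single j (A3 (r j)), fun i _ => ?_, by rw [hr, A3pow_single, Pi.single_eq_same]⟩
    by_cases hij : i = j
    · subst hij; simpa using A3_mem_evenWeight hrj
    · simp [hij]
  · rw [Submodule.map_le_iff_le_comap]
    intro g hg
    rw [Submodule.mem_comap, ← Finset.univ_sum_single g, map_sum]
    refine Submodule.sum_mem _ fun j _ => ?_
    suffices h : Submodule.span F2 {A3 1, A3 2} ≤
        (BiD m 1 1).comap (coordSum ∘ₗ LinearMap.single F2 (fun _ => ZMod 3 → F2) j) from
      h (evenWeight_le_span (hg j trivial))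
    rw [Submodule.span_le]
    rintro _ (rfl | rfl) <;>
    · refine Submodule.subset_span ⟨Pi.single j _, ?_, (A3pow_single j _).symm⟩
      rw [hammingNorm_A3pow, hammingNorm_single j (by decide)]
      simp [mul_comm]

theorem two_mul_hammingNorm_coordSum {m : ℕ} {g : Fin m → ZMod 3 → F2}
    (hg : ∀ i, g i ∈ evenWeight) :
    2 * (hammingNorm (coordSum g) : ℤ) =
      3 ^ m - (-1) ^ hammingNorm g * 3 ^ (m - hammingNorm g) := by
  have hsum := sum_signChar_eq (coordSum g)
  rw [sum_addChar_coordSum, Finset.prod_congr rfl fun i _ => sum_signChar_of_mem_evenWeight (hg i),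
    prod_ite_eq_zero_eq_pow_mul_pow] at hsum
  simp only [Fintype.card_fin, Fintype.card_pi, Finset.prod_const, Finset.card_univ,
    ZMod.card] at hsum
  push_cast at hsum
  linear_combination hsum

theorem exists_mem_BiD_one_one_hammingNorm_eq_iff (m d : ℕ) :
    (∃ a ∈ BiD m 1 1, hammingNorm a = d) ↔
      ∃ k ≤ m, 2 * (d : ℤ) = 3 ^ m - (-1) ^ k * 3 ^ (m - k) := by
  simp only [BiD_one_one_eq_map, Submodule.mem_map, Submodule.mem_pi, Set.mem_univ, true_implies]
  constructor
  · rintro ⟨_, ⟨g, hg, rfl⟩, rfl⟩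
    exact ⟨hammingNorm g, (hammingNorm_le_card_fintype).trans_eq (Fintype.card_fin m),
      two_mul_hammingNorm_coordSum hg⟩
  · rintro ⟨k, hk, hd⟩
    let g : Fin m → ZMod 3 → F2 := fun i => if (i : ℕ) < k then A3 1 else 0
    have hg : ∀ i, g i ∈ evenWeight := fun i => by
      by_cases hi : (i : ℕ) < k
      · simpa [g, hi] using A3_mem_evenWeight one_ne_zero
      · simp [g, hi]
    have hnorm : hammingNorm g = k := by
      have hA3 : A3 1 ≠ 0 := by decide
      simp only [hammingNorm, g, ne_eq, ite_eq_right_iff, hA3, imp_false, not_not,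
        Fin.card_filter_val_lt]
      omega
    refine ⟨coordSum g, ⟨g, hg, rfl⟩, ?_⟩
    have hweight := two_mul_hammingNorm_coordSum hg
    rw [hnorm, ← hd] at hweight
    omega

theorem neg_three_pow_le_neg_one_pow_mul_three_pow (m k : ℕ) :
    -(3 : ℤ) ^ (m - 1) ≤ (-1) ^ k * 3 ^ (m - k) := by
  rcases Nat.even_or_odd k with hk | hk
  · rw [hk.neg_one_pow, one_mul]
    exact (neg_nonpos.mpr (by positivity)).trans (by positivity)
  · rw [hk.neg_one_pow, neg_one_mul, neg_le_neg_iff]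
    exact pow_le_pow_right₀ (by norm_num) (Nat.sub_le_sub_left hk.pos m)

theorem neg_one_pow_mul_three_pow_le {m k : ℕ} (hk : k ≠ 0) :
    (-1 : ℤ) ^ k * 3 ^ (m - k) ≤ 3 ^ (m - 2) := by
  rcases Nat.even_or_odd k with hk' | hk'
  · rw [hk'.neg_one_pow, one_mul]
    exact pow_le_pow_right₀ (by norm_num) (by obtain ⟨t, rfl⟩ := hk'; omega)
  · rw [hk'.neg_one_pow, neg_one_mul]
    exact (neg_nonpos.mpr (by positivity)).trans (by positivity)

/-- For `m ≥ 2`, the minimum nonzero weight of `BiD(m,1,1)` is `4·3^(m-2)` and the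
maximum weight of a codeword is `6·3^(m-2)`. -/
theorem BiD_m_1_1_min_max_weight (m : ℕ) (hm : 2 ≤ m) :
    IsLeast {d : ℕ | ∃ a ∈ BiD m 1 1, a ≠ 0 ∧ hammingNorm a = d} (4 * 3^(m-2)) ∧
    IsGreatest {d : ℕ | ∃ a ∈ BiD m 1 1, hammingNorm a = d} (6 * 3^(m-2)) := by
  obtain ⟨n, rfl⟩ := Nat.exists_eq_add_of_le' hm
  have nonzero (d : ℕ) : (∃ a ∈ BiD (n + 2) 1 1, a ≠ 0 ∧ hammingNorm a = d) ↔
      d ≠ 0 ∧ ∃ a ∈ BiD (n + 2) 1 1, hammingNorm a = d := by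
    constructor
    · rintro ⟨a, ha, hne, rfl⟩; exact ⟨hammingNorm_ne_zero_iff.mpr hne, a, ha, rfl⟩
    · rintro ⟨hd, a, ha, rfl⟩; exact ⟨a, ha, hammingNorm_ne_zero_iff.mp hd, rfl⟩
  simp only [Set.mem_ofPred_eq, IsLeast, IsGreatest, upperBounds, lowerBounds, nonzero,
    exists_mem_BiD_one_one_hammingNorm_eq_iff, Nat.add_sub_cancel]
  refine ⟨⟨⟨by positivity, 2, by omega, by push_cast; ring⟩, ?_⟩,
    ⟨⟨1, by omega, by push_cast; ring⟩, ?_⟩⟩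
  · rintro d ⟨hd, k, -, hdk⟩
    have hk : k ≠ 0 := by rintro rfl; simp at hdk; omega
    have hbound := neg_one_pow_mul_three_pow_le (m := n + 2) hk
    rw [Nat.add_sub_cancel] at hbound
    exact_mod_cast (by linarith [pow_add (3 : ℤ) n 2] : (4 * 3 ^ n : ℤ) ≤ d)
  · rintro d ⟨k, -, hdk⟩
    have hbound := neg_three_pow_le_neg_one_pow_mul_three_pow (n + 2) k
    rw [show n + 2 - 1 = n + 1 from rfl] at hbound
    exact_mod_cast (by linarith [pow_add (3 : ℤ) n 2, pow_succ (3 : ℤ) n] : (d : ℤ) ≤ 6 * 3 ^ n)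
end
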